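/- Let ρ₁ and ρ₂ be pure orthogonal qubit states with Bloch vectors ±(sinθ cosφ, sinθ sinφ, cosθ). Applying the coarse-graining map λ with λ(ρ⊗ρ) = diag( ¼(1 + r_z)², ¼(1 − r_z)² + ½(1 − r_z²) ) (where r_z is the z-component of the Bloch vector of ρ), the trace distance of the outputs satisfies D(λ(ρ₁⊗ρ₁), λ(ρ₂⊗ρ₂)) = |cosθ|. In particular, for pure orthogonal states the coarse-graining map does not increase the distinguishability, since D(ρ₁,ρ₂) = 1 ≥ |cosθ|. -/

import Mathlib

open Matrix Complex ComplexOrder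

abbrev Mat (d : ℕ) := Matrix (Fin d) (Fin d) ℂ

/-- The extension `I_n ⊗ Λ` of a matrix map `Λ` by the identity on a first tensor factor. -/
def matExt {α β : Type*} [Fintype α] [Fintype β] (n : ℕ)
    (Λ : Matrix α α ℂ → Matrix β β ℂ)
    (A : Matrix (Fin n × α) (Fin n × α) ℂ) :
    Matrix (Fin n × β) (Fin n × β) ℂ :=
  fun p q => Λ (fun k l => A (p.1, k) (q.1, l)) p.2 q.2

/-- The extension `Λ ⊗ I` of a matrix map `Λ` by the identity on a second tensor factor. -/
def extSecond {α β : Type*} [Fintype α] [Fintype β] (n : ℕ)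
    (Λ : Matrix α α ℂ → Matrix β β ℂ)
    (A : Matrix (α × Fin n) (α × Fin n) ℂ) :
    Matrix (β × Fin n) (β × Fin n) ℂ :=
  fun p q => Λ (fun k l => A (k, p.2) (l, q.2)) p.1 q.1

/-- A matrix map is positive if it preserves positive semidefiniteness. -/
def IsPosMap {α β : Type*} [Fintype α] [Fintype β]
    (Λ : Matrix α α ℂ → Matrix β β ℂ) : Prop :=
  ∀ A, A.PosSemidef → (Λ A).PosSemidef

/-- Complete positivity: every identity extension preserves positive semidefiniteness. -/
def IsCP {α β : Type*} [Fintype α] [Fintype β]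
    (Λ : Matrix α α ℂ → Matrix β β ℂ) : Prop :=
  ∀ (n : ℕ) (A : Matrix (Fin n × α) (Fin n × α) ℂ),
    A.PosSemidef → (matExt n Λ A).PosSemidef

/-- Trace preservation. -/
def IsTP {α β : Type*} [Fintype α] [Fintype β]
    (Λ : Matrix α α ℂ → Matrix β β ℂ) : Prop :=
  ∀ A, (Λ A).trace = A.trace

def IsCPTP {α β : Type*} [Fintype α] [Fintype β]
    (Λ : Matrix α α ℂ → Matrix β β ℂ) : Prop :=
  IsCP Λ ∧ IsTP Λ

/-- The trace norm `‖A‖₁ = Tr √(AᴴA)`. -/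
noncomputable def traceNorm {m : Type*} [Fintype m] [DecidableEq m] (A : Matrix m m ℂ) : ℝ :=
  (((Matrix.posSemidef_conjTranspose_mul_self A).1.eigenvectorUnitary.1 *
      diagonal (fun i => ((Real.sqrt ((Matrix.posSemidef_conjTranspose_mul_self A).1.eigenvalues i) : ℝ) : ℂ)) *
      (star (Matrix.posSemidef_conjTranspose_mul_self A).1.eigenvectorUnitary : Matrix m m ℂ)).trace).re

/-- The `n`-fold tensor power `Λ^{⊗n}` of a linear matrix map. -/
noncomputable def tensorPow {d : ℕ} (n : ℕ) (Λ : Mat d → Mat d)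
    (A : Matrix (Fin n → Fin d) (Fin n → Fin d) ℂ) :
    Matrix (Fin n → Fin d) (Fin n → Fin d) ℂ :=
  fun p q => ∑ i : Fin n → Fin d, ∑ j : Fin n → Fin d,
    A i j * ∏ k, Λ (Matrix.single (i k) (j k) 1) (p k) (q k)

/-- The (normalized) Choi matrix `(I ⊗ Λ)(|φ₊⟩⟨φ₊|)`. -/
noncomputable def choi {d : ℕ} (Λ : Mat d → Mat d) :
    Matrix (Fin d × Fin d) (Fin d × Fin d) ℂ :=
  fun p q => (1 / (d : ℂ)) * Λ (Matrix.single p.1 q.1 1) p.2 q.2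

noncomputable def σX : Mat 2 := !![0, 1; 1, 0]
noncomputable def σY : Mat 2 := !![0, -Complex.I; Complex.I, 0]
noncomputable def σZ : Mat 2 := !![1, 0; 0, -1]

/-- The single-collision channel Λ₁. -/
noncomputable def Lam1 (ε : ℝ) (ρ : Mat 2) : Mat 2 :=
  ((1 - 2*ε : ℝ) : ℂ) • ρ + ((ε : ℝ) : ℂ) • (σZ * ρ * σZ + σX * ρ * σX)

/-- The two-collision channel Λ₂. -/
noncomputable def Lam2 (ε : ℝ) (ρ : Mat 2) : Mat 2 :=
  (((1 - 2*ε)^2 + 4*ε^2 : ℝ) : ℂ) • ρ +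
    ((2*ε*(1 - 2*ε) : ℝ) : ℂ) • (σZ * ρ * σZ + σX * ρ * σX)

/-- A general qubit Pauli map. -/
noncomputable def pauliMap (q0 qx qy qz : ℝ) (ρ : Mat 2) : Mat 2 :=
  (q0 : ℂ) • ρ + (qx : ℂ) • (σX * ρ * σX) + (qy : ℂ) • (σY * ρ * σY) + (qz : ℂ) • (σZ * ρ * σZ)

/-- The qubit state with Bloch vector `(x, y, z)`. -/
noncomputable def bloch (x y z : ℝ) : Mat 2 :=
  (1/2 : ℂ) • !![1 + (z : ℂ), (x : ℂ) - Complex.I * (y : ℂ);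
                 (x : ℂ) + Complex.I * (y : ℂ), 1 - (z : ℂ)]

/-- The coarse-grained state `λ(ρ ⊗ ρ)` of a qubit with Bloch `z`-component `rz`. -/
noncomputable def cg (rz : ℝ) : Mat 2 :=
  !![(((1 + rz)^2 / 4 : ℝ) : ℂ), 0;
     0, (((1 - rz)^2 / 4 + (1 - rz^2) / 2 : ℝ) : ℂ)]

/-! The trace norm is the trace of any positive square root of `AᴴA`. The coarse-grained outputs
differ by `diag (-cos θ, cos θ)`, of trace norm `2 |cos θ|`, while the antipodal pure states differ
by `-(n · σ)` for a unit vector `n`, a unitary matrix, of trace norm `2`. -/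

section TraceNorm

variable {m : Type*} [Fintype m] [DecidableEq m]

open scoped MatrixOrder in
theorem traceNorm_eq_re_trace_sqrt (A : Matrix m m ℂ) :
    traceNorm A = (CFC.sqrt (Aᴴ * A)).trace.re := by
  have hAA := posSemidef_conjTranspose_mul_self A
  rw [CFC.sqrt_eq_real_sqrt (Aᴴ * A) hAA.nonneg, cfcₙ_eq_cfc (hf0 := Real.sqrt_zero),
    hAA.1.cfc_eq]
  simp [traceNorm, IsHermitian.cfc, Function.comp_def]

open scoped MatrixOrder in
theorem traceNorm_eq_of_sq_eq {A B : Matrix m m ℂ} (hB : B.PosSemidef) (h : B ^ 2 = Aᴴ * A) :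
    traceNorm A = B.trace.re := by
  rw [traceNorm_eq_re_trace_sqrt, ← h, CFC.sqrt_sq B hB.nonneg]

theorem traceNorm_diagonal (d : m → ℂ) : traceNorm (diagonal d) = ∑ i, ‖d i‖ := by
  have hB : (diagonal fun i => (‖d i‖ : ℂ)).PosSemidef :=
    posSemidef_diagonal_iff.mpr fun i => by simp
  rw [traceNorm_eq_of_sq_eq hB]
  · simp [trace]
  · rw [sq, diagonal_conjTranspose, diagonal_mul_diagonal, diagonal_mul_diagonal]
    congr 1
    funext i
    rw [Pi.star_apply, Complex.star_def, Complex.conj_mul', sq]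

theorem traceNorm_of_mem_unitary {A : Matrix m m ℂ} (hA : A ∈ unitary (Matrix m m ℂ)) :
    traceNorm A = Fintype.card m := by
  rw [traceNorm_eq_of_sq_eq PosSemidef.one (by rw [one_pow, ← star_eq_conjTranspose,
    Unitary.star_mul_self_of_mem hA])]
  simp

end TraceNorm

theorem cg_neg_sub_cg (c : ℝ) : cg (-c) - cg c = diagonal ![((-c : ℝ) : ℂ), (c : ℂ)] := by
  ext i j
  fin_cases i <;> fin_cases j <;> simp [cg] <;> ring

theorem bloch_neg_sub_bloch_mem_unitary {x y z : ℝ} (h : x ^ 2 + y ^ 2 + z ^ 2 = 1) :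
    bloch (-x) (-y) (-z) - bloch x y z ∈ unitary (Mat 2) := by
  rw [Matrix.mem_unitaryGroup_iff]
  ext i j
  fin_cases i <;> fin_cases j <;>
    simp [bloch, mul_apply, Fin.sum_univ_two, Complex.ext_iff] <;>
    constructor <;> first | ring1 | linear_combination h

/-- for pure orthogonal qubit states with antipodal unit Bloch vectors, the
trace distance of the coarse-grained outputs is `|cos θ|`, which does not exceed the initial
trace distance (equal to 1). -/
theorem coarse_graining_does_not_increase_distinguishability (θ φ : ℝ) :
    (1/2 : ℝ) * traceNorm (cg (-(Real.cos θ)) - cg (Real.cos θ)) = |Real.cos θ| ∧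
    |Real.cos θ| ≤ (1/2 : ℝ) * traceNorm
      (bloch (-(Real.sin θ * Real.cos φ)) (-(Real.sin θ * Real.sin φ)) (-(Real.cos θ))
        - bloch (Real.sin θ * Real.cos φ) (Real.sin θ * Real.sin φ) (Real.cos θ)) := by
  have unit_bloch : (Real.sin θ * Real.cos φ) ^ 2 + (Real.sin θ * Real.sin φ) ^ 2
      + Real.cos θ ^ 2 = 1 := by
    linear_combination (Real.sin θ ^ 2) * Real.sin_sq_add_cos_sq φ + Real.sin_sq_add_cos_sq θ
  rw [cg_neg_sub_cg, traceNorm_diagonal,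
    traceNorm_of_mem_unitary (bloch_neg_sub_bloch_mem_unitary unit_bloch)]
  refine ⟨?_, ?_⟩
  · simp only [Fin.sum_univ_two, cons_val_zero, cons_val_one, Complex.norm_real,
      Real.norm_eq_abs, abs_neg]
    ring
  · simpa using Real.abs_cos_le_one θ
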